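/- arXiv:2105.04965 — 3 statements merged into one kernel-verified Lean document; each statement's English description precedes it below -/
import Mathlib

section
/- Let d ≥ 2 and L ≥ 1 be integers, and let T be a finite tree on n vertices in which every vertex has degree at most d and n > L. Then the vertex set of T can be partitioned into nonempty parts such that each part induces a connected subgraph of T and each part contains more than L and at most d·L + 1 vertices. -/
/-!
For an edge `vc` inside a subtree `A`, call the component of `c` in `A - v` a branch. Choose a
branch `B` with more than `L` vertices and as few vertices as possible. The branches at `c`
pointing away from `v` are strictly smaller branches, so each has at most `L` vertices; there
are at most `d - 1` of them, hence `L < |B| ≤ (d - 1) L + 1`. Removing `B` leaves a subtree: if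
it still has more than `L` vertices, recurse on it, otherwise keep `A` as a single part, of size
at most `(d - 1) L + 1 + L`. If no branch has more than `L` vertices, counting the branches at
any vertex gives `|A| ≤ d L + 1`.
-/

open Finset Set

namespace SimpleGraph

variable {V : Type*} {G : SimpleGraph V} {S T A : Set V} {u v w x c c₁ c₂ : V}

/-- The vertex set of the connected component of `w` in `G.induce S` (empty if `w ∉ S`). -/
def componentIn (G : SimpleGraph V) (S : Set V) (w : V) : Set V :=
  {u | ∃ p : G.Walk w u, ∀ x ∈ p.support, x ∈ S}

lemma componentIn_subset : G.componentIn S w ⊆ S :=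
  fun _ ⟨p, hp⟩ ↦ hp _ p.end_mem_support

lemma mem_of_mem_componentIn (hu : u ∈ G.componentIn S w) : w ∈ S :=
  let ⟨p, hp⟩ := hu; hp _ p.start_mem_support

lemma mem_componentIn_self (hw : w ∈ S) : w ∈ G.componentIn S w :=
  ⟨.nil, by simpa⟩

lemma componentIn_mono (h : S ⊆ T) : G.componentIn S w ⊆ G.componentIn T w :=
  fun _ ⟨p, hp⟩ ↦ ⟨p, fun x hx ↦ h (hp x hx)⟩

lemma mem_componentIn_comm : u ∈ G.componentIn S w ↔ w ∈ G.componentIn S u :=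
  ⟨fun ⟨p, hp⟩ ↦ ⟨p.reverse, by simpa using hp⟩, fun ⟨p, hp⟩ ↦ ⟨p.reverse, by simpa using hp⟩⟩

lemma mem_componentIn_trans (hu : u ∈ G.componentIn S w) (hx : x ∈ G.componentIn S u) :
    x ∈ G.componentIn S w := by
  obtain ⟨p, hp⟩ := hu
  obtain ⟨q, hq⟩ := hx
  refine ⟨p.append q, fun y hy ↦ ?_⟩
  rcases Walk.mem_support_append_iff p q |>.1 hy with hy | hy
  exacts [hp y hy, hq y hy]

lemma mem_componentIn_of_mem_support {p : G.Walk w u} (hp : ∀ y ∈ p.support, y ∈ S)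
    (hx : x ∈ p.support) : x ∈ G.componentIn S w := by
  classical
  exact ⟨p.takeUntil x hx, fun y hy ↦ hp y (p.support_takeUntil_subset_support hx hy)⟩

lemma connected_induce_componentIn (hw : w ∈ S) : (G.induce (G.componentIn S w)).Connected :=
  induce_connected_of_patches w (mem_componentIn_self hw) fun ⟨p, hp⟩ ↦
    ⟨{x | x ∈ p.support}, fun _ hx ↦ mem_componentIn_of_mem_support hp hx,
      p.start_mem_support, p.end_mem_support, p.connected_induce_support.preconnected _ _⟩

lemma componentIn_eq_of_connected (hS : (G.induce S).Connected) (hw : w ∈ S) :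
    G.componentIn S w = S := by
  refine componentIn_subset.antisymm fun u hu ↦ ?_
  obtain ⟨p⟩ := hS.preconnected ⟨w, hw⟩ ⟨u, hu⟩
  refine ⟨p.map (Embedding.induce S).toHom, fun x hx ↦ ?_⟩
  obtain ⟨y, -, rfl⟩ := List.mem_map.1 (Walk.support_map _ p ▸ hx)
  exact y.2

lemma exists_adj_mem_componentIn_diff (hx : x ∈ G.componentIn S c) (hxc : x ≠ c) :
    ∃ w, G.Adj c w ∧ x ∈ G.componentIn (S \ {c}) w := by
  classical
  obtain ⟨p, hp⟩ := hx
  obtain ⟨q, hq, hqS⟩ : ∃ q : G.Walk c x, q.IsPath ∧ ∀ y ∈ q.support, y ∈ S :=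
    ⟨p.bypass, p.bypass_isPath, fun y hy ↦ hp y (p.support_bypass_subset_support hy)⟩
  cases q with
  | nil => exact absurd rfl hxc
  | cons hcw r =>
    rw [Walk.cons_isPath_iff] at hq
    exact ⟨_, hcw, r, fun y hy ↦ ⟨hqS y (by simp [hy]), fun hyc ↦ hq.2 (hyc ▸ hy)⟩⟩

lemma ncard_componentIn_le [Finite V] (N : Finset V) (hN : ∀ w, G.Adj c w → w ∈ S → w ∈ N)
    {L : ℕ} (hL : ∀ w ∈ N, (G.componentIn (S \ {c}) w).ncard ≤ L) :
    (G.componentIn S c).ncard ≤ #N * L + 1 := by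
  have hcover : G.componentIn S c ⊆ insert c (⋃ w ∈ N, G.componentIn (S \ {c}) w) := by
    intro x hx
    obtain rfl | hxc := eq_or_ne x c
    · exact mem_insert _ _
    obtain ⟨w, hcw, hxw⟩ := exists_adj_mem_componentIn_diff hx hxc
    exact mem_insert_of_mem _ <| mem_biUnion (hN w hcw (mem_of_mem_componentIn hxw).1) hxw
  calc (G.componentIn S c).ncard
      ≤ (⋃ w ∈ N, G.componentIn (S \ {c}) w).ncard + 1 :=
        (ncard_le_ncard hcover).trans (ncard_insert_le _ _)
    _ ≤ ∑ w ∈ N, (G.componentIn (S \ {c}) w).ncard + 1 := by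
        gcongr; exact N.set_ncard_biUnion_le _
    _ ≤ #N * L + 1 := by
        gcongr; simpa using Finset.sum_le_card_nsmul N _ L hL

lemma connected_induce_diff_componentIn (hA : (G.induce A).Connected) (hv : v ∈ A) :
    (G.induce (A \ G.componentIn (A \ {v}) w)).Connected := by
  set B := G.componentIn (A \ {v}) w
  have hvB : v ∉ B := fun h ↦ (componentIn_subset h).2 rfl
  refine induce_connected_of_patches v ⟨hv, hvB⟩ fun {u} hu ↦ ?_
  obtain rfl | huv := eq_or_ne u v
  · exact ⟨{u}, by simpa using hu, rfl, rfl, .rfl⟩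
  rw [← componentIn_eq_of_connected hA hv] at hu
  obtain ⟨w', hvw', q, hq⟩ := exists_adj_mem_componentIn_diff hu.1 huv
  have hpB : ∀ y ∈ (Walk.cons hvw' q).support, y ∈ A \ B := by
    simp only [Walk.support_cons, List.mem_cons, forall_eq_or_imp]
    refine ⟨⟨hv, hvB⟩, fun y hy ↦ ⟨(hq y hy).1, fun hyB ↦ hu.2 ?_⟩⟩
    have hyu : y ∈ G.componentIn (A \ {v}) u :=
      mem_componentIn_of_mem_support (p := q.reverse) (by simpa using hq) (by simpa using hy)
    exact mem_componentIn_trans hyB (mem_componentIn_comm.1 hyu)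
  exact ⟨_, hpB, Walk.start_mem_support _, Walk.end_mem_support _,
    (Walk.cons hvw' q).connected_induce_support.preconnected _ _⟩

namespace IsAcyclic

variable (hG : G.IsAcyclic)
include hG

lemma eq_of_adj_of_mem_componentIn (hv : v ∉ S) (h₁ : G.Adj v c₁) (h₂ : G.Adj v c₂)
    (hc : c₂ ∈ G.componentIn S c₁) : c₁ = c₂ := by
  classical
  obtain ⟨p, hp⟩ := hc
  have hpath : (Walk.cons h₁ p.bypass).IsPath :=
    Walk.cons_isPath_iff _ _ |>.2
      ⟨p.bypass_isPath, fun h ↦ hv (hp v (p.support_bypass_subset_support h))⟩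
  simpa using (hG.eq_snd_of_adj_start hpath h₂ (by simp)).symm

lemma componentIn_subset_componentIn (hc : c ∈ A) (hvc : G.Adj v c) (hcw : G.Adj c w)
    (hwv : w ≠ v) : G.componentIn (A \ {c}) w ⊆ G.componentIn (A \ {v}) c \ {c} := by
  rintro x ⟨p, hp⟩
  have hvp : v ∉ p.support := fun h ↦ hwv <|
    hG.eq_of_adj_of_mem_componentIn (by simp) hcw hvc.symm (mem_componentIn_of_mem_support hp h)
  refine ⟨⟨Walk.cons hcw p, ?_⟩, (hp x p.end_mem_support).2⟩
  simp only [Walk.support_cons, List.mem_cons, forall_eq_or_imp]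
  exact ⟨⟨hc, hvc.ne'⟩, fun y hy ↦ ⟨(hp y hy).1, fun hyv ↦ hvp (hyv ▸ hy)⟩⟩

variable [Fintype V] [DecidableRel G.Adj] {d L : ℕ}

lemma ncard_le_or_exists_branch (hdeg : ∀ v, G.degree v ≤ d) (hA : (G.induce A).Connected) :
    A.ncard ≤ d * L + 1 ∨ ∃ B ⊆ A, (G.induce B).Connected ∧ (G.induce (A \ B)).Connected ∧
      L < B.ncard ∧ B.ncard + L ≤ d * L + 1 := by
  classical
  set H := {p : V × V | p.1 ∈ A ∧ G.Adj p.1 p.2 ∧ L < (G.componentIn (A \ {p.1}) p.2).ncard}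
  rcases H.eq_empty_or_nonempty with hH | hH
  · left
    obtain ⟨c, hc⟩ := hA.nonempty
    rw [← componentIn_eq_of_connected hA hc]
    calc (G.componentIn A c).ncard ≤ #(G.neighborFinset c) * L + 1 := by
          refine ncard_componentIn_le _ (fun w hcw _ ↦ by simpa) fun w hw ↦ not_lt.1 fun hL ↦ ?_
          exact eq_empty_iff_forall_notMem.1 hH (c, w) ⟨hc, by simpa using hw, hL⟩
      _ ≤ d * L + 1 := by rw [card_neighborFinset_eq_degree]; gcongr; exact hdeg c
  right
  obtain ⟨⟨v, c⟩, ⟨hv, hvc, hLB⟩, hmin⟩ :=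
    H.exists_min_image (fun p ↦ (G.componentIn (A \ {p.1}) p.2).ncard) H.toFinite hH
  set B := G.componentIn (A \ {v}) c
  obtain ⟨x, hx⟩ := nonempty_of_ncard_ne_zero (s := B) (by omega)
  have hcA := mem_of_mem_componentIn hx
  have hcB : c ∈ B := mem_componentIn_self hcA
  have hsmall : ∀ w ∈ (G.neighborFinset c).erase v,
      (G.componentIn ((A \ {v}) \ {c}) w).ncard ≤ L := by
    intro w hw
    obtain ⟨hwv, hcw⟩ : w ≠ v ∧ G.Adj c w := by simpa using hw
    have hlt : (G.componentIn (A \ {c}) w).ncard < B.ncard :=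
      ncard_lt_ncard <| (hG.componentIn_subset_componentIn hcA.1 hvc hcw hwv).trans_ssubset
        (sdiff_singleton_ssubset.2 hcB)
    calc (G.componentIn ((A \ {v}) \ {c}) w).ncard ≤ (G.componentIn (A \ {c}) w).ncard :=
          ncard_le_ncard (componentIn_mono (sdiff_subset_sdiff_left sdiff_subset))
      _ ≤ L := not_lt.1 fun hL ↦ (hmin (c, w) ⟨hcA.1, hcw, hL⟩).not_gt hlt
  refine ⟨B, componentIn_subset.trans sdiff_subset, connected_induce_componentIn hcA,
    connected_induce_diff_componentIn hA hv, hLB, ?_⟩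
  have hvN : v ∈ G.neighborFinset c := by simpa using hvc.symm
  calc B.ncard + L ≤ #((G.neighborFinset c).erase v) * L + 1 + L := by
        gcongr
        exact ncard_componentIn_le _ (fun w hcw hw ↦ mem_erase.2 ⟨hw.2, by simpa using hcw⟩) hsmall
    _ = #(G.neighborFinset c) * L + 1 := by rw [← card_erase_add_one hvN]; ring
    _ ≤ d * L + 1 := by rw [card_neighborFinset_eq_degree]; gcongr; exact hdeg c

theorem exists_connected_partition (hdeg : ∀ v, G.degree v ≤ d) (hA : (G.induce A).Connected)
    (hL : L < A.ncard) :
    ∃ P : Set (Set V), ⋃₀ P = A ∧ P.PairwiseDisjoint id ∧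
      ∀ S ∈ P, (G.induce S).Connected ∧ L < S.ncard ∧ S.ncard ≤ d * L + 1 := by
  induction hn : A.ncard using Nat.strong_induction_on generalizing A with
  | _ n ih =>
  have hsingle (h : A.ncard ≤ d * L + 1) : ∃ P : Set (Set V), ⋃₀ P = A ∧ P.PairwiseDisjoint id ∧
      ∀ S ∈ P, (G.induce S).Connected ∧ L < S.ncard ∧ S.ncard ≤ d * L + 1 :=
    ⟨{A}, sUnion_singleton A, pairwiseDisjoint_singleton _ _, by simpa using ⟨hA, hL, h⟩⟩
  obtain hsmall | ⟨B, hBA, hB, hAB, hLB, hBle⟩ := hG.ncard_le_or_exists_branch hdeg hA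
  · exact hsingle hsmall
  have hcard : (A \ B).ncard + B.ncard = A.ncard := ncard_sdiff_add_ncard_of_subset hBA
  by_cases hrest : L < (A \ B).ncard
  · obtain ⟨P, hPA, hPd, hP⟩ := ih _ (by omega) hAB hrest rfl
    refine ⟨insert B P, by rw [sUnion_insert, hPA, union_sdiff_cancel hBA], ?_, ?_⟩
    · exact hPd.insert fun S hS _ ↦
        disjoint_sdiff_right.mono_right (hPA ▸ subset_sUnion_of_mem hS)
    · exact forall_mem_insert.2 ⟨⟨hB, hLB, by omega⟩, hP⟩
  · exact hsingle (by omega)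

end IsAcyclic

end SimpleGraph

open SimpleGraph

theorem tree_cluster_partition_general {V : Type} [Fintype V] (G : SimpleGraph V)
    [DecidableRel G.Adj] (hT : G.IsTree) (d L : ℕ)
    (hdeg : ∀ v : V, G.degree v ≤ d) (hn : L < Fintype.card V) :
    ∃ P : Set (Set V), Setoid.IsPartition P ∧
      ∀ S ∈ P, (G.induce S).Connected ∧ L < Nat.card S ∧ Nat.card S ≤ d * L + 1 := by
  have hconn : (G.induce (univ : Set V)).Connected := G.induceUnivIso.connected_iff.2 hT.connected
  obtain ⟨P, hPV, hPd, hP⟩ := hT.isAcyclic.exists_connected_partition hdeg hconn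
    (by rwa [ncard_univ, Nat.card_eq_fintype_card])
  refine ⟨P, hPd.isPartition_of_exists_of_ne_empty (fun a ↦ ?_) fun h ↦ ?_, fun S hS ↦ ?_⟩
  · rw [← mem_sUnion, hPV]; exact mem_univ a
  · simpa using (hP ∅ h).2.1
  · simpa only [Nat.card_coe_set_eq] using hP S hS

/-- Let `d ≥ 2` and `L ≥ 1` be integers and `T` a finite tree on `n` vertices with every
vertex of degree at most `d` and `n > L`.  Then the vertex set of `T` can be partitioned
into nonempty parts, each inducing a connected subgraph of `T`, with each part containing
more than `L` and at most `d * L + 1` vertices. -/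
theorem tree_cluster_partition {V : Type} [Fintype V] (G : SimpleGraph V)
    [DecidableRel G.Adj] (hT : G.IsTree) (d L : ℕ) (hd : 2 ≤ d) (hL : 1 ≤ L)
    (hdeg : ∀ v : V, G.degree v ≤ d) (hn : L < Fintype.card V) :
    ∃ P : Set (Set V), Setoid.IsPartition P ∧
      ∀ S ∈ P, (G.induce S).Connected ∧ L < Nat.card S ∧ Nat.card S ≤ d * L + 1 :=
  tree_cluster_partition_general G hT d L hdeg hn
end

section
/- Let T be a finite tree, let e = {u, v} be an edge of T, and let W be a closed walk in T that traverses every dart of T exactly once. Let C_v be the vertex set of the connected component containing v of the graph obtained from T by deleting the edge e, and let s = |C_v|. Then, in the cyclic sequence of darts traversed by W, the darts occurring strictly after the traversal of (u, v) and strictly before the traversal of (v, u) are exactly the darts of T whose both endpoints lie in C_v, and their number is 2(s − 1). -/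
/-! Cut the tour at the dart `(u, v)` and then at `(v, u)`. Since every dart occurs once, the piece
`B` between them is a closed walk at `v` and the rest `C` a closed walk at `u`, neither using the
edge `{u, v}`. Hence `B` stays in the component `C_v` of `T - e`, and `C` in the component of `u`,
which is a different one because `e` is a bridge. As the tour contains every dart, the darts of `B`
are exactly those of the subtree induced on `C_v`, and there are `2 (|C_v| - 1)` of them. -/

namespace SimpleGraph

variable {V : Type*} {G : SimpleGraph V}

namespace Walk

theorem exists_eq_append_cons_of_mem_darts {x y x' y' : V} (p : G.Walk x y) (h : G.Adj x' y')
    (hd : ⟨(x', y'), h⟩ ∈ p.darts) :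
    ∃ (q : G.Walk x x') (r : G.Walk y' y), p = q.append (cons h r) := by
  induction p with
  | nil => simp at hd
  | @cons x z y h' p ih =>
    rw [darts_cons, List.mem_cons] at hd
    rcases hd with hd | hd
    · obtain ⟨rfl, rfl⟩ := Prod.ext_iff.mp ((Dart.ext_iff _ _).mp hd)
      exact ⟨nil, p, rfl⟩
    · obtain ⟨q, r, rfl⟩ := ih hd
      exact ⟨cons h' q, r, rfl⟩

theorem exists_rotate_darts_eq_cons_append_cons {a u v : V} (w : G.Walk a a) (h : G.Adj u v)
    (h₀ : ⟨(u, v), h⟩ ∈ w.darts) (h₁ : ⟨(v, u), h.symm⟩ ∈ w.darts) :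
    ∃ (n : ℕ) (B : G.Walk v v) (C : G.Walk u u),
      w.darts.rotate n = ⟨(u, v), h⟩ :: (B.darts ++ ⟨(v, u), h.symm⟩ :: C.darts) := by
  obtain ⟨p, q, rfl⟩ := w.exists_eq_append_cons_of_mem_darts h h₀
  have hrot : (p.append (cons h q)).darts.rotate p.length = ⟨(u, v), h⟩ :: (q.append p).darts := by
    rw [darts_append, ← length_darts, List.rotate_append_length_eq, darts_cons, darts_append,
      List.cons_append]
  have h₁' : ⟨(v, u), h.symm⟩ ∈ (q.append p).darts := by
    rw [← List.mem_rotate (n := p.length), hrot] at h₁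
    refine (List.mem_cons.mp h₁).resolve_left fun he => h.ne ?_
    exact (congrArg (·.fst) he).symm
  obtain ⟨B, C, hBC⟩ := (q.append p).exists_eq_append_cons_of_mem_darts h.symm h₁'
  exact ⟨p.length, B, C, by rw [hrot, hBC, darts_append, darts_cons]⟩

theorem mem_edges_iff_mem_darts {x y u v : V} (p : G.Walk x y) (h : G.Adj u v) :
    s(u, v) ∈ p.edges ↔ ⟨(u, v), h⟩ ∈ p.darts ∨ ⟨(v, u), h.symm⟩ ∈ p.darts := by
  simp only [edges, List.mem_map, dart_edge_eq_mk'_iff]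
  constructor
  · rintro ⟨d, hd, hd' | hd'⟩
    · exact .inl (Dart.ext _ ⟨_, h⟩ hd' ▸ hd)
    · exact .inr (Dart.ext _ ⟨_, h.symm⟩ hd' ▸ hd)
  · rintro (hd | hd)
    · exact ⟨_, hd, .inl rfl⟩
    · exact ⟨_, hd, .inr rfl⟩

theorem dart_mem_supp_deleteEdges {x y : V} {e : Sym2 V} (p : G.Walk x y) (he : e ∉ p.edges)
    {d : G.Dart} (hd : d ∈ p.darts) :
    d.fst ∈ ((G.deleteEdges {e}).connectedComponentMk x).supp ∧
      d.snd ∈ ((G.deleteEdges {e}).connectedComponentMk x).supp := by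
  classical
  let p' := p.toDeleteEdge e he
  have hd' : d.fst ∈ p'.support ∧ d.snd ∈ p'.support := by
    rw [support_transfer]
    exact ⟨p.dart_fst_mem_support_of_mem_darts hd, p.dart_snd_mem_support_of_mem_darts hd⟩
  exact ⟨ConnectedComponent.sound (p'.takeUntil _ hd'.1).reachable.symm,
    ConnectedComponent.sound (p'.takeUntil _ hd'.2).reachable.symm⟩

end Walk

theorem IsAcyclic.connectedComponentMk_deleteEdges_ne (hG : G.IsAcyclic) {u v : V}
    (h : G.Adj u v) :
    (G.deleteEdges {s(u, v)}).connectedComponentMk u ≠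
      (G.deleteEdges {s(u, v)}).connectedComponentMk v := fun huv =>
  isBridge_iff.mp (isAcyclic_iff_forall_adj_isBridge.mp hG h) (ConnectedComponent.exact huv)

theorem IsAcyclic.isTree_induce_supp (hG : G.IsAcyclic) {H : SimpleGraph V} (hH : H ≤ G)
    (c : H.ConnectedComponent) : (G.induce c.supp).IsTree :=
  ⟨c.connected_toSimpleGraph.mono fun _ _ hxy => hH hxy, hG.induce _⟩

theorem IsTree.nat_card_dart [Finite V] (hG : G.IsTree) :
    Nat.card G.Dart = 2 * (Nat.card V - 1) := by
  have := Fintype.ofFinite V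
  classical
  have := hG.card_edgeFinset
  rw [Nat.card_eq_fintype_card, G.dart_card_eq_twice_card_edges, Nat.card_eq_fintype_card]
  omega

def induceDartEquiv (s : Set V) :
    (G.induce s).Dart ≃ {d : G.Dart // d.fst ∈ s ∧ d.snd ∈ s} where
  toFun d := ⟨⟨(d.fst, d.snd), d.adj⟩, d.fst.2, d.snd.2⟩
  invFun d := ⟨(⟨d.1.fst, d.2.1⟩, ⟨d.1.snd, d.2.2⟩), d.1.adj⟩
  left_inv _ := rfl
  right_inv _ := rfl

theorem IsTree.nat_card_dart_induce [Finite V] {s : Set V} (hs : (G.induce s).IsTree) :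
    Nat.card {d : G.Dart // d.fst ∈ s ∧ d.snd ∈ s} = 2 * (Nat.card s - 1) := by
  rw [← Nat.card_congr (induceDartEquiv s), hs.nat_card_dart]

end SimpleGraph

theorem List.Nodup.length_eq_nat_card {α : Type*} {l : List α} (hl : l.Nodup) {p : α → Prop}
    (h : ∀ x, x ∈ l ↔ p x) : l.length = Nat.card {x // p x} := by
  classical
  have hl' : ∀ x, x ∈ l.toFinset ↔ p x := by simpa using h
  have : Fintype {x // p x} := Fintype.subtype l.toFinset hl'
  rw [Nat.card_eq_fintype_card, Fintype.card_of_subtype l.toFinset hl',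
    List.toFinset_card_of_nodup hl]

/-- Let `T` be a tree, `e = {u, v}` an edge of `T`, and `W` a closed walk traversing
every dart of `T` exactly once.  Let `C_v` be the vertex set of the connected component
of `v` after deleting the edge `e`, and `s = |C_v|`.  Then in the cyclic sequence of
darts of `W`, the darts strictly after the traversal of `(u, v)` and strictly before the
traversal of `(v, u)` are exactly the darts with both endpoints in `C_v`, and there are
`2 * (s - 1)` of them. -/
theorem euler_tour_subtree_segment {V : Type} [Fintype V] (G : SimpleGraph V)
    (hT : G.IsTree) (u v : V) (huv : G.Adj u v) (a : V) (w : G.Walk a a)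
    (hnodup : w.darts.Nodup) (hall : ∀ d : G.Dart, d ∈ w.darts) :
    ∃ (n : ℕ) (B C : List G.Dart),
      w.darts.rotate n =
        (⟨(u, v), huv⟩ : G.Dart) :: (B ++ (⟨(v, u), huv.symm⟩ : G.Dart) :: C) ∧
      (∀ d : G.Dart, d ∈ B ↔
        (d.fst ∈ ((G.deleteEdges {s(u, v)}).connectedComponentMk v).supp ∧
         d.snd ∈ ((G.deleteEdges {s(u, v)}).connectedComponentMk v).supp)) ∧
      B.length =
        2 * (Nat.card ((G.deleteEdges {s(u, v)}).connectedComponentMk v).supp - 1) := by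
  set c := (G.deleteEdges {s(u, v)}).connectedComponentMk v
  obtain ⟨n, B, C, hrot⟩ := w.exists_rotate_darts_eq_cons_append_cons huv (hall _) (hall _)
  have hnd := hrot ▸ List.nodup_rotate.mpr hnodup
  simp only [List.nodup_cons, List.nodup_append, List.mem_append, List.mem_cons, not_or] at hnd
  obtain ⟨⟨h₀B, -, h₀C⟩, hBnd, ⟨h₁C, -⟩, hBC⟩ := hnd
  have hBe : s(u, v) ∉ B.edges := by
    rw [B.mem_edges_iff_mem_darts huv, not_or]
    exact ⟨h₀B, fun h₁B => hBC _ h₁B _ (.inl rfl) rfl⟩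
  have hCe : s(u, v) ∉ C.edges := by
    rw [C.mem_edges_iff_mem_darts huv, not_or]
    exact ⟨h₀C, h₁C⟩
  have hu : u ∉ c.supp := hT.isAcyclic.connectedComponentMk_deleteEdges_ne huv
  have hC : ∀ d ∈ C.darts, d.fst ∉ c.supp := fun d hd hdc =>
    hu ((C.dart_mem_supp_deleteEdges hCe hd).1.symm.trans hdc)
  have hBiff : ∀ d, d ∈ B.darts ↔ d.fst ∈ c.supp ∧ d.snd ∈ c.supp := by
    refine fun d => ⟨fun hd => B.dart_mem_supp_deleteEdges hBe hd, fun ⟨hfst, hsnd⟩ => ?_⟩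
    have hd := hrot ▸ List.mem_rotate.mpr (hall d)
    simp only [List.mem_cons, List.mem_append] at hd
    rcases hd with rfl | hd | rfl | hd
    exacts [absurd hfst hu, hd, absurd hsnd hu, absurd hfst (hC d hd)]
  refine ⟨n, B.darts, C.darts, hrot, hBiff, ?_⟩
  rw [hBnd.length_eq_nat_card hBiff,
    (hT.isAcyclic.isTree_induce_supp (G.deleteEdges_le _) c).nat_card_dart_induce]
end

section
/- Let B ≥ 3 be a real number, let N be an integer with N > B, and let a_1, …, a_d be positive integers with a_i < B/3 for every i and a_1 + ⋯ + a_d = N − 1. Then there exists an index j with 0 ≤ j ≤ d such that |(a_1 + ⋯ + a_j) − (a_{j+1} + ⋯ + a_d)| < B/3, and for any such j both (a_1 + ⋯ + a_j) + 1 > B/3 and (a_{j+1} + ⋯ + a_d) + 1 > B/3. -/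
/-- Let `B ≥ 3` be real, `N` an integer with `N > B`, and `a 0, …, a (d-1)` positive
integers with `a i < B / 3` for all `i` and total sum `N - 1`.  Then some index `j` with
`0 ≤ j ≤ d` satisfies `|(a 0 + ⋯ + a (j-1)) - (a j + ⋯ + a (d-1))| < B / 3`, and for any
such `j`, both `(a 0 + ⋯ + a (j-1)) + 1 > B / 3` and `(a j + ⋯ + a (d-1)) + 1 > B / 3`. -/
theorem centroid_split_sizes (B : ℝ) (hB : 3 ≤ B) (N : ℤ) (hN : B < (N : ℝ))
    (d : ℕ) (a : ℕ → ℤ) (hpos : ∀ i < d, 0 < a i)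
    (hlt : ∀ i < d, (a i : ℝ) < B / 3)
    (hsum : ∑ i ∈ Finset.range d, a i = N - 1) :
    (∃ j ≤ d,
      |(∑ i ∈ Finset.range j, (a i : ℝ)) - (∑ i ∈ Finset.Ico j d, (a i : ℝ))| < B / 3) ∧
    ∀ j ≤ d,
      |(∑ i ∈ Finset.range j, (a i : ℝ)) - (∑ i ∈ Finset.Ico j d, (a i : ℝ))| < B / 3 →
      B / 3 < (∑ i ∈ Finset.range j, (a i : ℝ)) + 1 ∧
      B / 3 < (∑ i ∈ Finset.Ico j d, (a i : ℝ)) + 1 := by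
  have hN4 : (4 : ℤ) ≤ N := by
    have : (3 : ℝ) < (N : ℝ) := lt_of_le_of_lt hB hN
    exact_mod_cast this
  -- key: for j ≤ d, Ico-sum = (N-1) - range-sum (in ℝ)
  have hsplit : ∀ j ≤ d, (∑ i ∈ Finset.range j, (a i : ℝ)) +
      (∑ i ∈ Finset.Ico j d, (a i : ℝ)) = (N : ℝ) - 1 := by
    intro j hj
    have h1 : (∑ i ∈ Finset.Ico 0 j, (a i : ℝ)) + (∑ i ∈ Finset.Ico j d, (a i : ℝ)) =
        ∑ i ∈ Finset.Ico 0 d, (a i : ℝ) :=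
      Finset.sum_Ico_consecutive _ (Nat.zero_le j) hj
    have h2 : (∑ i ∈ Finset.range d, (a i : ℝ)) = (N : ℝ) - 1 := by
      have := congrArg (fun z : ℤ => (z : ℝ)) hsum
      push_cast at this
      simpa using this
    simpa [← Finset.range_eq_Ico, h2] using h1
  have hBN : B - 1 < (N : ℝ) - 1 := by linarith
  constructor
  · -- existence
    classical
    have hPd : (N - 1 : ℤ) ≤ 2 * ∑ i ∈ Finset.range d, a i := by
      rw [hsum]; omega
    set P : ℕ → Prop := fun j => (N - 1 : ℤ) ≤ 2 * ∑ i ∈ Finset.range j, a i with hP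
    have hex : ∃ j, P j := ⟨d, hPd⟩
    let j := Nat.find hex
    have hPj : P j := Nat.find_spec hex
    have hjd : j ≤ d := Nat.find_min' hex hPd
    have hj0 : j ≠ 0 := by
      intro h
      have := hPj
      rw [h] at this
      simp [P] at this
      omega
    obtain ⟨k, hk⟩ : ∃ k, j = k + 1 := ⟨j - 1, (Nat.succ_pred_eq_of_pos (Nat.pos_of_ne_zero hj0)).symm⟩
    have hnPk : ¬ P k := Nat.find_min hex (by omega)
    have hkd : k < d := by omega
    have hak : (a k : ℝ) < B / 3 := hlt k hkd
    -- sums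
    have hSk : 2 * (∑ i ∈ Finset.range k, (a i : ℝ)) < (N : ℝ) - 1 := by
      simp only [P, not_le] at hnPk
      have : (2 * ∑ i ∈ Finset.range k, a i : ℝ) < ((N : ℤ) - 1 : ℤ) := by
        exact_mod_cast hnPk
      push_cast at this
      linarith
    have hSj : (N : ℝ) - 1 ≤ 2 * (∑ i ∈ Finset.range j, (a i : ℝ)) := by
      have : ((N : ℤ) - 1 : ℤ) ≤ (2 * ∑ i ∈ Finset.range j, a i : ℝ) := by
        exact_mod_cast hPj
      push_cast at this
      linarith
    have hstep : (∑ i ∈ Finset.range j, (a i : ℝ)) =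
        (∑ i ∈ Finset.range k, (a i : ℝ)) + (a k : ℝ) := by
      rw [hk, Finset.sum_range_succ]
    by_cases hcase : 2 * (∑ i ∈ Finset.range j, (a i : ℝ)) - ((N : ℝ) - 1) < B / 3
    · refine ⟨j, hjd, ?_⟩
      have hs := hsplit j hjd
      rw [abs_lt]
      constructor <;> linarith
    · refine ⟨k, le_of_lt hkd, ?_⟩
      have hs := hsplit k (le_of_lt hkd)
      push_neg at hcase
      rw [abs_lt]
      constructor <;> linarith
  · intro j hj habs
    have hs := hsplit j hj
    rw [abs_lt] at habs
    constructor <;> linarith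
end
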